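/- arXiv:math/9801126 — 5 statements merged into one kernel-verified Lean document; each statement's English description precedes it below -/
import Mathlib

section
/- Let n ≥ 2 and let r, q, t, s be integers with n ≥ t > s ≥ 1 and n ≥ r > q ≥ 1. If (t − r)(t − q)(s − r)(s − q) > 0, then in the braid group B_n the band generators commute: a_{t,s} · a_{r,q} = a_{r,q} · a_{t,s}. -/
/-- Relations for the Artin presentation of the braid group `B n`.
Generators are indexed by `Fin (n-1)`, with index `i` representing `σ_{i+1}`. -/
def braidRels (n : ℕ) : Set (FreeGroup (Fin (n - 1))) :=
  { r | (∃ i j : Fin (n - 1), (i : ℕ) + 2 ≤ (j : ℕ) ∧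
          r = FreeGroup.of i * FreeGroup.of j * (FreeGroup.of i)⁻¹ * (FreeGroup.of j)⁻¹) ∨
        (∃ i j : Fin (n - 1), (j : ℕ) = (i : ℕ) + 1 ∧
          r = FreeGroup.of i * FreeGroup.of j * FreeGroup.of i *
              (FreeGroup.of j * FreeGroup.of i * FreeGroup.of j)⁻¹) }

/-- The braid group `B n` on `n` strands, as a presented group. -/
abbrev BraidGroup (n : ℕ) : Type := PresentedGroup (braidRels n)

/-- The Artin generator `σ_i` of `B n`, for `1 ≤ i ≤ n - 1` (junk value `1` otherwise). -/
def braidGen (n i : ℕ) : BraidGroup n :=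
  if h : i - 1 < n - 1 then PresentedGroup.of ⟨i - 1, h⟩ else 1

/-- The conjugating word `σ_{t-1} σ_{t-2} ⋯ σ_{s+1}` used to define band generators. -/
def bandConj (n t s : ℕ) : BraidGroup n :=
  ((List.range (t - 1 - s)).map (fun k => braidGen n (t - 1 - k))).prod

/-- The band generator `a_{t,s} = (σ_{t-1} ⋯ σ_{s+1}) σ_s (σ_{t-1} ⋯ σ_{s+1})⁻¹` of `B n`. -/
def band (n t s : ℕ) : BraidGroup n :=
  bandConj n t s * braidGen n s * (bandConj n t s)⁻¹

/-! The positivity condition says that the intervals `[s, t]` and `[q, r]` are disjoint or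
strictly nested. Since `a_{t,s}` is a word in `σ_s, …, σ_{t-1}`, disjoint intervals give
commuting band generators by far commutativity. For `q < s < t < r` it suffices that `σ_i`
commutes with `a_{r,q}` whenever `q < i < r - 1`: the braid relation gives
`σ_i = c σ_{i+1} c⁻¹` for `c = σ_{r-1} ⋯ σ_{q+1}`, and `σ_{i+1}` commutes with `σ_q`. -/

lemma Int.disjoint_or_nested_of_mul_pos {t s r q : ℤ} (hst : s < t) (hqr : q < r)
    (h : 0 < (t - r) * (t - q) * (s - r) * (s - q)) :
    t < q ∨ r < s ∨ q < s ∧ t < r ∨ s < q ∧ r < t := by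
  rw [mul_assoc, mul_pos_iff, mul_pos_iff, mul_neg_iff, mul_pos_iff, mul_neg_iff] at h
  omega

namespace BraidGroup

variable {n : ℕ}

lemma commute_of_of {i j : Fin (n - 1)} (h : (i : ℕ) + 2 ≤ j) :
    Commute (PresentedGroup.of i : BraidGroup n) (PresentedGroup.of j) :=
  PresentedGroup.mk_eq_mk_of_mul_inv_mem (Or.inl ⟨i, j, h, by group⟩)

lemma of_braid {i j : Fin (n - 1)} (h : (j : ℕ) = i + 1) :
    (PresentedGroup.of i * PresentedGroup.of j * PresentedGroup.of i : BraidGroup n) =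
      PresentedGroup.of j * PresentedGroup.of i * PresentedGroup.of j :=
  PresentedGroup.mk_eq_mk_of_mul_inv_mem (Or.inr ⟨i, j, h, rfl⟩)

lemma braidGen_succ_eq_of {i : ℕ} (h : i < n - 1) :
    braidGen n (i + 1) = PresentedGroup.of ⟨i, h⟩ := by
  simp [braidGen, h]

lemma braidGen_eq_one {i : ℕ} (h : n ≤ i) : braidGen n i = 1 := by
  rw [braidGen, dif_neg (by omega)]

lemma braidGen_commute {i j : ℕ} (hi : 1 ≤ i) (hij : i + 2 ≤ j) :
    Commute (braidGen n i) (braidGen n j) := by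
  obtain hj | hj := le_or_gt n j
  · rw [braidGen_eq_one hj]
    exact Commute.one_right _
  obtain ⟨i, rfl⟩ : ∃ k, i = k + 1 := ⟨i - 1, by omega⟩
  obtain ⟨j, rfl⟩ : ∃ k, j = k + 1 := ⟨j - 1, by omega⟩
  rw [braidGen_succ_eq_of (by omega), braidGen_succ_eq_of (by omega)]
  exact commute_of_of (by simp only; omega)

lemma braidGen_braid {i : ℕ} (hi : 1 ≤ i) (hin : i + 1 < n) :
    braidGen n i * braidGen n (i + 1) * braidGen n i =
      braidGen n (i + 1) * braidGen n i * braidGen n (i + 1) := by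
  obtain ⟨i, rfl⟩ : ∃ k, i = k + 1 := ⟨i - 1, by omega⟩
  rw [braidGen_succ_eq_of (by omega), braidGen_succ_eq_of (by omega)]
  exact of_braid rfl

lemma bandConj_succ {t s : ℕ} (h : s < t) :
    bandConj n (t + 1) s = braidGen n t * bandConj n t s := by
  obtain ⟨m, hm⟩ : ∃ m, t - s = m + 1 := ⟨t - s - 1, by omega⟩
  simp only [bandConj, Nat.add_sub_cancel, hm, List.range_succ_eq_map, List.map_cons,
    List.prod_cons, List.map_map]
  rw [Nat.sub_zero, show t - 1 - s = m by omega]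
  congr 2
  exact List.map_congr_left fun k _ => congrArg (braidGen n) (by omega)

lemma commute_bandConj {t s : ℕ} {g : BraidGroup n}
    (h : ∀ j, s < j → j < t → Commute g (braidGen n j)) : Commute g (bandConj n t s) := by
  refine Commute.list_prod_right _ _ fun x hx => ?_
  obtain ⟨k, hk, rfl⟩ := List.mem_map.mp hx
  rw [List.mem_range] at hk
  exact h _ (by omega) (by omega)

lemma commute_band {t s : ℕ} {g : BraidGroup n} (hst : s < t)
    (h : ∀ j, s ≤ j → j < t → Commute g (braidGen n j)) : Commute g (band n t s) := by
  have hc : Commute g (bandConj n t s) := commute_bandConj fun j hsj hjt => h j hsj.le hjt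
  exact (hc.mul_right (h s le_rfl hst)).mul_right hc.inv_right

lemma braidGen_mul_bandConj {q r i : ℕ} (hqi : q < i) (hir : i + 2 ≤ r) (hrn : r ≤ n) :
    braidGen n i * bandConj n r q = bandConj n r q * braidGen n (i + 1) := by
  induction r, hir using Nat.le_induction with
  | base =>
    have hc : Commute (braidGen n (i + 1)) (bandConj n i q) :=
      commute_bandConj fun j _ hji => (braidGen_commute (by omega) (by omega)).symm
    rw [bandConj_succ (by omega), bandConj_succ hqi]
    calc braidGen n i * (braidGen n (i + 1) * (braidGen n i * bandConj n i q))
        = braidGen n (i + 1) * braidGen n i * braidGen n (i + 1) * bandConj n i q := by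
          rw [← braidGen_braid (by omega) (by omega)]; group
      _ = braidGen n (i + 1) * (braidGen n i * bandConj n i q) * braidGen n (i + 1) := by
          rw [mul_assoc _ (braidGen n (i + 1)), hc.eq]; group
  | succ r hir ih =>
    rw [bandConj_succ (by omega), ← mul_assoc,
      (braidGen_commute (by omega) (by omega) : Commute (braidGen n i) _).eq, mul_assoc,
      ih (by omega), mul_assoc]

lemma braidGen_commute_band {q r i : ℕ} (hq : 1 ≤ q) (hqi : q < i) (hir : i + 2 ≤ r)
    (hrn : r ≤ n) : Commute (braidGen n i) (band n r q) := by
  rw [band, eq_mul_inv_of_mul_eq (braidGen_mul_bandConj hqi hir hrn)]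
  exact (braidGen_commute (j := i + 1) hq (by omega)).symm.conj _

lemma band_commute_of_lt {t s r q : ℕ} (hs : 1 ≤ s) (hst : s < t) (hqr : q < r) (htq : t < q) :
    Commute (band n t s) (band n r q) :=
  commute_band hqr fun j hqj _ => (commute_band hst fun k hsk hkt =>
    (braidGen_commute (j := j) (hs.trans hsk) (by omega)).symm).symm

lemma band_commute_of_nested {t s r q : ℕ} (hq : 1 ≤ q) (hqs : q < s) (hst : s < t) (htr : t < r)
    (hrn : r ≤ n) : Commute (band n t s) (band n r q) :=
  (commute_band hst fun k hsk hkt =>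
    (braidGen_commute_band (i := k) hq (by omega) (by omega) hrn).symm).symm

end BraidGroup

open BraidGroup

theorem band_generators_commute_general (n t s r q : ℕ)
    (htn : t ≤ n) (hst : s < t) (hs : 1 ≤ s)
    (hrn : r ≤ n) (hqr : q < r) (hq : 1 ≤ q)
    (hpos : ((t : ℤ) - r) * ((t : ℤ) - q) * ((s : ℤ) - r) * ((s : ℤ) - q) > 0) :
    band n t s * band n r q = band n r q * band n t s := by
  rcases Int.disjoint_or_nested_of_mul_pos (by omega) (by omega) hpos with
    h | h | ⟨h₁, h₂⟩ | ⟨h₁, h₂⟩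
  · exact band_commute_of_lt hs hst hqr (by omega)
  · exact (band_commute_of_lt hq hqr hst (by omega)).symm
  · exact band_commute_of_nested hq (by omega) hst (by omega) hrn
  · exact (band_commute_of_nested hs (by omega) hqr (by omega) htn).symm

/-- If `n ≥ 2`, `n ≥ t > s ≥ 1`, `n ≥ r > q ≥ 1` and
`(t − r)(t − q)(s − r)(s − q) > 0`, then the band generators `a_{t,s}` and `a_{r,q}`
commute in the braid group `B n`. -/
theorem band_generators_commute (n t s r q : ℕ) (hn : 2 ≤ n)
    (htn : t ≤ n) (hst : s < t) (hs : 1 ≤ s)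
    (hrn : r ≤ n) (hqr : q < r) (hq : 1 ≤ q)
    (hpos : ((t : ℤ) - r) * ((t : ℤ) - q) * ((s : ℤ) - r) * ((s : ℤ) - q) > 0) :
    band n t s * band n r q = band n r q * band n t s :=
  band_generators_commute_general n t s r q htn hst hs hrn hqr hq hpos
end

section
/- Let n ≥ 2 and let t, s, r be integers with n ≥ t > s > r ≥ 1. Then in the braid group B_n the band generators satisfy a_{t,s} · a_{s,r} = a_{t,r} · a_{t,s} = a_{s,r} · a_{t,r}. -/
lemma braidRel_eq_one {n : ℕ} {r : FreeGroup (Fin (n-1))} (h : r ∈ braidRels n) :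
    (QuotientGroup.mk r : BraidGroup n) = 1 := by
  rw [QuotientGroup.eq_one_iff]
  exact Subgroup.subset_normalClosure h

lemma presOf_comm {n : ℕ} (i j : Fin (n-1)) (h : (i : ℕ) + 2 ≤ (j : ℕ)) :
    (PresentedGroup.of i : BraidGroup n) * PresentedGroup.of j =
      PresentedGroup.of j * PresentedGroup.of i := by
  have := braidRel_eq_one (n := n) (r := FreeGroup.of i * FreeGroup.of j * (FreeGroup.of i)⁻¹ * (FreeGroup.of j)⁻¹) (Or.inl ⟨i, j, h, rfl⟩)
  have h2 : (PresentedGroup.of i : BraidGroup n) * PresentedGroup.of j *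
      (PresentedGroup.of i : BraidGroup n)⁻¹ * (PresentedGroup.of j)⁻¹ = 1 := by
    exact this
  exact commutatorElement_eq_one_iff_mul_comm.mp (by simpa [commutatorElement_def] using h2)

lemma presOf_braid {n : ℕ} (i j : Fin (n-1)) (h : (j : ℕ) = (i : ℕ) + 1) :
    (PresentedGroup.of i : BraidGroup n) * PresentedGroup.of j * PresentedGroup.of i =
      PresentedGroup.of j * PresentedGroup.of i * PresentedGroup.of j := by
  have := braidRel_eq_one (n := n)
    (r := FreeGroup.of i * FreeGroup.of j * FreeGroup.of i *
      (FreeGroup.of j * FreeGroup.of i * FreeGroup.of j)⁻¹) (Or.inr ⟨i, j, h, rfl⟩)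
  have h2 : (PresentedGroup.of i : BraidGroup n) * PresentedGroup.of j * PresentedGroup.of i *
      ((PresentedGroup.of j : BraidGroup n) * PresentedGroup.of i * PresentedGroup.of j)⁻¹ = 1 := by
    exact this
  exact mul_inv_eq_one.mp h2

lemma braidGen_comm {n : ℕ} {i j : ℕ} (hi : 1 ≤ i) (hij : i + 2 ≤ j) :
    Commute (braidGen n i) (braidGen n j) := by
  unfold braidGen
  by_cases hj : j - 1 < n - 1
  · have hi' : i - 1 < n - 1 := by omega
    rw [dif_pos hi', dif_pos hj]
    exact presOf_comm ⟨i-1, hi'⟩ ⟨j-1, hj⟩ (by simp; omega)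
  · rw [dif_neg hj]
    exact Commute.one_right _

lemma braidGen_braid {n : ℕ} {i : ℕ} (hi : 1 ≤ i) (hin : i + 1 ≤ n - 1) :
    braidGen n i * braidGen n (i+1) * braidGen n i =
      braidGen n (i+1) * braidGen n i * braidGen n (i+1) := by
  have h1 : i - 1 < n - 1 := by omega
  have h2 : i + 1 - 1 < n - 1 := by omega
  unfold braidGen
  rw [dif_pos h1, dif_pos h2]
  exact presOf_braid ⟨i-1, h1⟩ ⟨i+1-1, h2⟩ (by simp; omega)

lemma band_base (n s : ℕ) : band n (s+1) s = braidGen n s := by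
  have h : s + 1 - 1 - s = 0 := by omega
  simp [band, bandConj, h]

lemma bandConj_succ (n t s : ℕ) (h : s + 2 ≤ t) :
    bandConj n t s = braidGen n (t-1) * bandConj n (t-1) s := by
  unfold bandConj
  have h1 : t - 1 - s = (t - 1 - 1 - s) + 1 := by omega
  rw [h1, List.range_succ_eq_map, List.map_cons, List.prod_cons, List.map_map]
  congr 2
  apply List.map_congr_left
  intro k hk
  simp only [Function.comp, Nat.succ_eq_add_one]
  congr 1
  omega

lemma band_succ (n t s : ℕ) (h : s + 2 ≤ t) :
    band n t s = braidGen n (t-1) * band n (t-1) s * (braidGen n (t-1))⁻¹ := by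
  rw [band, band, bandConj_succ n t s h]
  group

lemma braidGen_comm_band {n t s j : ℕ} (hs : 1 ≤ s) (hst : s < t) (hj : t + 1 ≤ j) :
    Commute (braidGen n j) (band n t s) := by
  have hconj : Commute (braidGen n j) (bandConj n t s) := by
    apply Commute.list_prod_right
    intro x hx
    simp only [List.mem_map, List.mem_range] at hx
    obtain ⟨k, hk, rfl⟩ := hx
    exact (braidGen_comm (n := n) (i := t - 1 - k) (j := j) (by omega) (by omega)).symm
  exact Commute.mul_right (Commute.mul_right hconj
    ((braidGen_comm (n := n) hs (by omega)).symm)) hconj.inv_right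

lemma band_braid {n r : ℕ} (hr : 1 ≤ r) : ∀ s, r + 1 ≤ s → s ≤ n - 1 →
    braidGen n s * band n s r * braidGen n s = band n s r * braidGen n s * band n s r := by
  intro s hs
  induction s, hs using Nat.le_induction with
  | base =>
    intro hn
    rw [band_base]
    exact (braidGen_braid hr (by omega)).symm
  | succ s hs ih =>
    intro hn
    have ihs := ih (by omega)
    set x := braidGen n s with hx
    set y := braidGen n (s+1) with hy
    set b := band n s r with hb
    have hbr : x * y * x = y * x * y := braidGen_braid (by omega) (by omega)
    have hcomm : y * b = b * y := braidGen_comm_band (by omega) (by omega) (le_refl _)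
    have hcomm' : y⁻¹ * b = b * y⁻¹ :=
      ((braidGen_comm_band (n := n) (t := s) (s := r) (j := s+1) (by omega) (by omega)
        (le_refl _)).inv_left).eq
    have h1 : x⁻¹ * y * x = y * x * y⁻¹ := by
      have l : x * ((x⁻¹ * y * x) * y) = y * x * y := by group
      have r2 : x * ((y * x * y⁻¹) * y) = x * y * x := by group
      have e1 : x * ((x⁻¹ * y * x) * y) = x * ((y * x * y⁻¹) * y) := by rw [l, r2, hbr]
      exact mul_right_cancel (mul_left_cancel e1)
    have hband : band n (s+1) r = x * b * x⁻¹ := by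
      rw [band_succ n (s+1) r (by omega)]; simp [hx, hb]
    rw [hband]
    symm
    calc (x * b * x⁻¹) * y * (x * b * x⁻¹)
        = x * b * (x⁻¹ * y * x) * b * x⁻¹ := by group
      _ = x * b * (y * x * y⁻¹) * b * x⁻¹ := by rw [h1]
      _ = x * b * y * x * (y⁻¹ * b) * x⁻¹ := by group
      _ = x * b * y * x * (b * y⁻¹) * x⁻¹ := by rw [hcomm']
      _ = x * (b * y) * x * b * y⁻¹ * x⁻¹ := by group
      _ = x * (y * b) * x * b * y⁻¹ * x⁻¹ := by rw [hcomm]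
      _ = x * y * (b * x * b) * y⁻¹ * x⁻¹ := by group
      _ = x * y * (x * b * x) * y⁻¹ * x⁻¹ := by rw [← ihs]
      _ = (x * y * x) * b * (x * y⁻¹ * x⁻¹) := by group
      _ = (y * x * y) * b * (x * y⁻¹ * x⁻¹) := by rw [hbr]
      _ = y * x * (y * b) * x * y⁻¹ * x⁻¹ := by group
      _ = y * x * (b * y) * x * y⁻¹ * x⁻¹ := by rw [hcomm]
      _ = y * x * b * (y * x * y⁻¹) * x⁻¹ := by group
      _ = y * x * b * (x⁻¹ * y * x) * x⁻¹ := by rw [← h1]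
      _ = y * (x * b * x⁻¹) * y := by group

/-- If `n ≥ 2` and `n ≥ t > s > r ≥ 1`, then in the braid group `B n`
the band generators satisfy `a_{t,s} a_{s,r} = a_{t,r} a_{t,s} = a_{s,r} a_{t,r}`. -/
theorem band_generators_relation (n t s r : ℕ) (hn : 2 ≤ n)
    (htn : t ≤ n) (hst : s < t) (hrs : r < s) (hr : 1 ≤ r) :
    band n t s * band n s r = band n t r * band n t s ∧
    band n t r * band n t s = band n s r * band n t r := by
  have key : ∀ t, s + 1 ≤ t → t ≤ n →
      (band n t s * band n s r = band n t r * band n t s ∧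
       band n t r * band n t s = band n s r * band n t r) := by
    intro t ht
    induction t, ht using Nat.le_induction with
    | base =>
      intro hn'
      rw [band_base]
      have hrec : band n (s+1) r = braidGen n s * band n s r * (braidGen n s)⁻¹ := by
        rw [band_succ n (s+1) r (by omega)]; simp
      have hA := band_braid (n := n) hr s (by omega) (by omega)
      set x := braidGen n s
      set b := band n s r
      constructor
      · rw [hrec]; group
      · rw [hrec]
        have l : (x * b * x⁻¹ * x) * x = x * (b * x) := by group
        have r2 : (b * (x * b * x⁻¹)) * x = b * x * b := by group
        have e1 : (x * b * x⁻¹ * x) * x = (b * (x * b * x⁻¹)) * x := by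
          rw [l, r2, ← mul_assoc, hA]
        exact mul_right_cancel e1
    | succ t ht ih =>
      intro hn'
      obtain ⟨ih1, ih2⟩ := ih (by omega)
      have hcs : Commute (braidGen n t) (band n s r) :=
        braidGen_comm_band hr hrs (by omega)
      have hcs' : band n s r * (braidGen n t)⁻¹ = (braidGen n t)⁻¹ * band n s r :=
        hcs.inv_left.symm.eq
      have e1 : band n (t+1) s = braidGen n t * band n t s * (braidGen n t)⁻¹ := by
        rw [band_succ n (t+1) s (by omega)]; simp
      have e2 : band n (t+1) r = braidGen n t * band n t r * (braidGen n t)⁻¹ := by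
        rw [band_succ n (t+1) r (by omega)]; simp
      set σ := braidGen n t
      constructor
      · rw [e1, e2]
        calc σ * band n t s * σ⁻¹ * band n s r
            = σ * band n t s * (σ⁻¹ * band n s r) := by group
          _ = σ * band n t s * (band n s r * σ⁻¹) := by rw [hcs.inv_left.eq]
          _ = σ * (band n t s * band n s r) * σ⁻¹ := by group
          _ = σ * (band n t r * band n t s) * σ⁻¹ := by rw [ih1]
          _ = (σ * band n t r * σ⁻¹) * (σ * band n t s * σ⁻¹) := by group
      · rw [e1, e2]
        calc σ * band n t r * σ⁻¹ * (σ * band n t s * σ⁻¹)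
            = σ * (band n t r * band n t s) * σ⁻¹ := by group
          _ = σ * (band n s r * band n t r) * σ⁻¹ := by rw [ih2]
          _ = (σ * band n s r) * band n t r * σ⁻¹ := by group
          _ = (band n s r * σ) * band n t r * σ⁻¹ := by rw [hcs.eq]
          _ = band n s r * (σ * band n t r * σ⁻¹) := by group
  exact key t (by omega) htn
end

section
/- Let n ≥ 2 and let δ = a_{n,n−1} a_{n−1,n−2} ⋯ a_{2,1} ∈ B_n be the fundamental braid. Then for all integers t, s with n − 1 ≥ t > s ≥ 1 one has a_{t,s} · δ = δ · a_{t+1,s+1} in B_n, and for all integers t, s with n ≥ t > s ≥ 2 one has a_{t,s} · δ^{−1} = δ^{−1} · a_{t−1,s−1} in B_n. -/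
/-- The fundamental braid `δ = a_{n,n-1} a_{n-1,n-2} ⋯ a_{2,1}` in `B n`. -/
def fundamentalBraid (n : ℕ) : BraidGroup n :=
  ((List.range (n - 1)).map (fun k => band n (n - k) (n - k - 1))).prod

/-- The submonoid of `B n` generated by the band generators `a_{t,s}`, `n ≥ t > s ≥ 1`. -/
def bandSubmonoid (n : ℕ) : Submonoid (BraidGroup n) :=
  Submonoid.closure { x | ∃ t s : ℕ, t ≤ n ∧ s < t ∧ 1 ≤ s ∧ x = band n t s }

lemma rel_one {n : ℕ} {r : FreeGroup (Fin (n - 1))} (hr : r ∈ braidRels n) :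
    PresentedGroup.mk (braidRels n) r = 1 :=
  (QuotientGroup.eq_one_iff r).mpr (Subgroup.subset_normalClosure hr)

lemma of_eq_mk {n : ℕ} (x : Fin (n-1)) :
    (PresentedGroup.of x : BraidGroup n) = PresentedGroup.mk (braidRels n) (FreeGroup.of x) := rfl

lemma gen_comm {n a b : ℕ} (ha : 1 ≤ a) (hab : a + 2 ≤ b) :
    braidGen n a * braidGen n b = braidGen n b * braidGen n a := by
  unfold braidGen
  by_cases hb : b - 1 < n - 1
  · have ha' : a - 1 < n - 1 := by omega
    rw [dif_pos hb, dif_pos ha', of_eq_mk, of_eq_mk]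
    have h1 : PresentedGroup.mk (braidRels n)
        (FreeGroup.of ⟨a-1, ha'⟩ * FreeGroup.of ⟨b-1, hb⟩ *
          (FreeGroup.of ⟨a-1, ha'⟩)⁻¹ * (FreeGroup.of ⟨b-1, hb⟩)⁻¹) = 1 :=
      rel_one (Or.inl ⟨⟨a-1, ha'⟩, ⟨b-1, hb⟩, by simp; omega, rfl⟩)
    simp only [map_mul, map_inv] at h1
    exact mul_inv_eq_iff_eq_mul.mp (mul_inv_eq_one.mp h1)
  · rw [dif_neg hb]
    simp

lemma gen_braid {n a : ℕ} (ha : 1 ≤ a) (hb : a + 1 ≤ n - 1) :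
    braidGen n a * braidGen n (a+1) * braidGen n a
      = braidGen n (a+1) * braidGen n a * braidGen n (a+1) := by
  unfold braidGen
  have ha' : a - 1 < n - 1 := by omega
  have hb' : a + 1 - 1 < n - 1 := by omega
  rw [dif_pos ha', dif_pos hb', of_eq_mk, of_eq_mk]
  have h1 : PresentedGroup.mk (braidRels n)
      (FreeGroup.of ⟨a-1, ha'⟩ * FreeGroup.of ⟨a+1-1, hb'⟩ * FreeGroup.of ⟨a-1, ha'⟩ *
        (FreeGroup.of ⟨a+1-1, hb'⟩ * FreeGroup.of ⟨a-1, ha'⟩ * FreeGroup.of ⟨a+1-1, hb'⟩)⁻¹) = 1 :=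
    rel_one (Or.inr ⟨⟨a-1, ha'⟩, ⟨a+1-1, hb'⟩, by simp; omega, rfl⟩)
  simp only [map_mul, map_inv] at h1
  exact mul_inv_eq_one.mp h1

/-- `T n j = σ_j σ_{j-1} ⋯ σ_1`. -/
def Tword (n j : ℕ) : BraidGroup n :=
  ((List.range j).map (fun k => braidGen n (j - k))).prod

lemma Tword_succ (n j : ℕ) : Tword n (j+1) = braidGen n (j+1) * Tword n j := by
  unfold Tword
  rw [List.range_succ_eq_map]
  simp [List.map_map, Function.comp_def]

lemma gen_comm_T {n a m : ℕ} (hm : m + 2 ≤ a) :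
    braidGen n a * Tword n m = Tword n m * braidGen n a := by
  induction m with
  | zero => simp [Tword]
  | succ m ih =>
    rw [Tword_succ, ← mul_assoc,
      (gen_comm (n:=n) (a:=m+1) (b:=a) (by omega) (by omega)).symm, mul_assoc,
      ih (by omega), mul_assoc]

lemma sigma_T {n i j : ℕ} (hi : 1 ≤ i) (hij : i < j) (hj : j ≤ n - 1) :
    braidGen n i * Tword n j = Tword n j * braidGen n (i + 1) := by
  induction j with
  | zero => omega
  | succ j ih =>
    rw [Tword_succ]
    rcases Nat.lt_or_ge i j with h | h
    · rw [← mul_assoc, gen_comm hi (by omega), mul_assoc, ih h (by omega),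
        ← mul_assoc, mul_assoc]
    · -- i = j
      have hij' : i = j := by omega
      subst hij'
      obtain ⟨m, rfl⟩ : ∃ m, i = m + 1 := ⟨i - 1, by omega⟩
      rw [Tword_succ, ← mul_assoc, ← mul_assoc,
        gen_braid (by omega) (by omega), mul_assoc, mul_assoc,
        gen_comm_T (by omega), ← mul_assoc, ← mul_assoc]
      group

lemma band_succ_self (n t : ℕ) : band n t (t - 1) = braidGen n (t - 1) := by
  have h : bandConj n t (t-1) = 1 := by
    unfold bandConj
    have : t - 1 - (t - 1) = 0 := by omega
    rw [this]; simp
  rw [band, h]; simp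

lemma delta_eq (n : ℕ) : fundamentalBraid n = Tword n (n - 1) := by
  unfold fundamentalBraid Tword
  congr 1
  apply List.map_congr_left
  intro k hk
  rw [List.mem_range] at hk
  rw [show n - k - 1 = (n - k) - 1 from rfl, band_succ_self]
  congr 1
  omega

lemma sigma_delta {n i : ℕ} (hi : 1 ≤ i) (hin : i ≤ n - 2) (hn : 2 ≤ n) :
    braidGen n i * fundamentalBraid n = fundamentalBraid n * braidGen n (i + 1) := by
  rw [delta_eq]
  exact sigma_T hi (by omega) (by omega)

lemma conj_gen {n i : ℕ} (hi : 1 ≤ i) (hin : i ≤ n - 2) (hn : 2 ≤ n) :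
    (fundamentalBraid n)⁻¹ * braidGen n i * fundamentalBraid n = braidGen n (i + 1) := by
  rw [mul_assoc, sigma_delta hi hin hn, ← mul_assoc, inv_mul_cancel, one_mul]

lemma conj_list {n : ℕ} (hn : 2 ≤ n) (L : List ℕ)
    (hL : ∀ a ∈ L, 1 ≤ a ∧ a ≤ n - 2) :
    (fundamentalBraid n)⁻¹ * (L.map (braidGen n)).prod * fundamentalBraid n
      = (L.map (fun a => braidGen n (a+1))).prod := by
  induction L with
  | nil => simp
  | cons a L ih =>
    have ha := hL a List.mem_cons_self
    simp only [List.map_cons, List.prod_cons]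
    calc (fundamentalBraid n)⁻¹ * (braidGen n a * (L.map (braidGen n)).prod) * fundamentalBraid n
        = ((fundamentalBraid n)⁻¹ * braidGen n a * fundamentalBraid n) *
          ((fundamentalBraid n)⁻¹ * (L.map (braidGen n)).prod * fundamentalBraid n) := by group
      _ = braidGen n (a+1) * (L.map (fun a => braidGen n (a+1))).prod := by
          rw [conj_gen ha.1 ha.2 hn, ih (fun b hb => hL b (List.mem_cons_of_mem a hb))]

lemma conj_bandConj {n t s : ℕ} (hn : 2 ≤ n) (ht : t ≤ n - 1) (hs : 1 ≤ s) (hst : s < t) :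
    (fundamentalBraid n)⁻¹ * bandConj n t s * fundamentalBraid n = bandConj n (t+1) (s+1) := by
  unfold bandConj
  have hlen : t + 1 - 1 - (s + 1) = t - 1 - s := by omega
  rw [hlen]
  have key := conj_list hn ((List.range (t - 1 - s)).map (fun k => t - 1 - k)) ?_
  · rw [List.map_map, List.map_map] at key
    simp only [Function.comp_def] at key ⊢
    rw [key]
    congr 1
    apply List.map_congr_left
    intro k hk
    rw [List.mem_range] at hk
    congr 1
    omega
  · intro a ha
    simp only [List.mem_map, List.mem_range] at ha
    obtain ⟨k, hk, rfl⟩ := ha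
    omega

lemma conj_band {n t s : ℕ} (hn : 2 ≤ n) (ht : t ≤ n - 1) (hs : 1 ≤ s) (hst : s < t) :
    (fundamentalBraid n)⁻¹ * band n t s * fundamentalBraid n = band n (t+1) (s+1) := by
  unfold band
  have h1 := conj_bandConj hn ht hs hst
  have h2 : (fundamentalBraid n)⁻¹ * braidGen n s * fundamentalBraid n = braidGen n (s+1) :=
    conj_gen hs (by omega) hn
  calc (fundamentalBraid n)⁻¹ * (bandConj n t s * braidGen n s * (bandConj n t s)⁻¹) *
        fundamentalBraid n
      = ((fundamentalBraid n)⁻¹ * bandConj n t s * fundamentalBraid n) *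
        ((fundamentalBraid n)⁻¹ * braidGen n s * fundamentalBraid n) *
        ((fundamentalBraid n)⁻¹ * bandConj n t s * fundamentalBraid n)⁻¹ := by group
    _ = _ := by rw [h1, h2]


/-- Weak commutativity of the fundamental braid `δ` with the band
generators: `a_{t,s} δ = δ a_{t+1,s+1}` for `n - 1 ≥ t > s ≥ 1`, and
`a_{t,s} δ⁻¹ = δ⁻¹ a_{t-1,s-1}` for `n ≥ t > s ≥ 2`. -/
theorem band_delta_commutativity (n : ℕ) (hn : 2 ≤ n) :
    (∀ t s : ℕ, t ≤ n - 1 → s < t → 1 ≤ s →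
      band n t s * fundamentalBraid n = fundamentalBraid n * band n (t + 1) (s + 1)) ∧
    (∀ t s : ℕ, t ≤ n → s < t → 2 ≤ s →
      band n t s * (fundamentalBraid n)⁻¹ =
        (fundamentalBraid n)⁻¹ * band n (t - 1) (s - 1)) := by
  constructor
  · intro t s ht hst hs
    rw [← conj_band hn ht hs hst]
    group
  · intro t s ht hst hs
    have h := conj_band (n := n) (t := t - 1) (s := s - 1) hn (by omega) (by omega) (by omega)
    rw [show t - 1 + 1 = t by omega, show s - 1 + 1 = s by omega] at h
    rw [← h]
    group
end

section
/- Let n ≥ 2 and let δ = a_{n,n−1} a_{n−1,n−2} ⋯ a_{2,1} ∈ B_n be the fundamental braid. Then every element w of the braid group B_n can be written in the form w = δ^p · P, where p is an integer and P lies in the submonoid of B_n generated by the band generators {a_{t,s} : n ≥ t > s ≥ 1}. -/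
namespace DNF

lemma rel_eq_one {n : ℕ} {r : FreeGroup (Fin (n-1))} (hr : r ∈ braidRels n) :
    PresentedGroup.mk (braidRels n) r = 1 :=
  (QuotientGroup.eq_one_iff r).2 (Subgroup.subset_normalClosure hr)

lemma braidGen_eq {n i : ℕ} (h1 : 1 ≤ i) (h2 : i ≤ n - 1) :
    braidGen n i = PresentedGroup.mk (braidRels n) (FreeGroup.of (⟨i - 1, by omega⟩ : Fin (n-1))) := by
  rw [braidGen, dif_pos (by omega : i - 1 < n - 1)]; rfl

lemma gen_comm {n i j : ℕ} (h1 : 1 ≤ i) (h2 : i + 2 ≤ j) (h3 : j ≤ n - 1) :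
    braidGen n i * braidGen n j = braidGen n j * braidGen n i := by
  rw [braidGen_eq h1 (by omega), braidGen_eq (by omega : 1 ≤ j) h3]
  have hr : (FreeGroup.of (⟨i-1, by omega⟩ : Fin (n-1)) * FreeGroup.of (⟨j-1, by omega⟩ : Fin (n-1)) *
      (FreeGroup.of (⟨i-1, by omega⟩ : Fin (n-1)))⁻¹ * (FreeGroup.of (⟨j-1, by omega⟩ : Fin (n-1)))⁻¹) ∈ braidRels n :=
    Or.inl ⟨⟨i-1, by omega⟩, ⟨j-1, by omega⟩, by simp; omega, rfl⟩
  have h := rel_eq_one hr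
  simp only [map_mul, map_inv] at h
  have := mul_inv_eq_one.mp h
  exact mul_inv_eq_iff_eq_mul.mp this

lemma gen_braid {n i : ℕ} (h1 : 1 ≤ i) (h2 : i + 1 ≤ n - 1) :
    braidGen n i * braidGen n (i+1) * braidGen n i
      = braidGen n (i+1) * braidGen n i * braidGen n (i+1) := by
  rw [braidGen_eq h1 (by omega), braidGen_eq (by omega : 1 ≤ i + 1) h2]
  have hr : (FreeGroup.of (⟨i-1, by omega⟩ : Fin (n-1)) * FreeGroup.of (⟨i+1-1, by omega⟩ : Fin (n-1)) *
      FreeGroup.of (⟨i-1, by omega⟩ : Fin (n-1)) *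
      (FreeGroup.of (⟨i+1-1, by omega⟩ : Fin (n-1)) * FreeGroup.of (⟨i-1, by omega⟩ : Fin (n-1)) *
       FreeGroup.of (⟨i+1-1, by omega⟩ : Fin (n-1)))⁻¹) ∈ braidRels n :=
    Or.inr ⟨⟨i-1, by omega⟩, ⟨i+1-1, by omega⟩, by simp; omega, rfl⟩
  have h := rel_eq_one hr
  simp only [map_mul, map_inv] at h
  exact mul_inv_eq_one.mp h


/-- `Wd n s t = σ_t σ_{t-1} ⋯ σ_{s+1}` -/
def Wd (n s t : ℕ) : BraidGroup n :=
  ((List.range (t - s)).map (fun k => braidGen n (t - k))).prod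

lemma Wd_self {n : ℕ} (s : ℕ) : Wd n s s = 1 := by simp [Wd]

lemma Wd_peel_top {n s t : ℕ} (h : s < t) :
    Wd n s t = braidGen n t * Wd n s (t-1) := by
  have ht : t - s = (t - 1 - s) + 1 := by omega
  rw [Wd, ht, List.range_succ_eq_map, List.map_cons, List.prod_cons, List.map_map,
      Nat.sub_zero]
  congr 1
  rw [Wd]
  congr 1
  apply List.map_congr_left
  intro k _
  simp only [Function.comp_apply]
  congr 1
  omega

lemma Wd_peel_bot {n s t : ℕ} (h : s < t) :
    Wd n s t = Wd n (s+1) t * braidGen n (s+1) := by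
  have ht : t - s = (t - (s+1)) + 1 := by omega
  rw [Wd, ht, List.range_succ, List.map_append, List.prod_append]
  congr 1
  simp only [List.map_cons, List.map_nil, List.prod_cons, List.prod_nil, mul_one]
  congr 1
  omega

lemma Wd_split {n : ℕ} {s r t : ℕ} (h1 : s ≤ r) (h2 : r ≤ t) :
    Wd n s t = Wd n r t * Wd n s r := by
  induction r, h1 using Nat.le_induction with
  | base => rw [Wd_self, mul_one]
  | succ r hsr ih =>
    rw [ih (by omega), Wd_peel_bot (show r < t by omega),
        Wd_peel_top (show s < r + 1 by omega)]
    simp only [Nat.add_sub_cancel]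
    group

lemma gen_comm_Wd {n i s t : ℕ} (hst : s ≤ t)
    (h : ∀ j, s < j → j ≤ t → braidGen n i * braidGen n j = braidGen n j * braidGen n i) :
    braidGen n i * Wd n s t = Wd n s t * braidGen n i := by
  induction t, hst using Nat.le_induction with
  | base => rw [Wd_self, mul_one, one_mul]
  | succ t hst ih =>
    rw [Wd_peel_top (show s < t + 1 by omega)]
    simp only [Nat.add_sub_cancel]
    rw [← mul_assoc, h (t+1) (by omega) le_rfl, mul_assoc,
        ih (fun j hj1 hj2 => h j hj1 (by omega)), mul_assoc]

lemma Wd_comm_Wd {n a b s t : ℕ} (hab : a ≤ b) (hst : s ≤ t)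
    (h : ∀ i j, a < i → i ≤ b → s < j → j ≤ t →
      braidGen n i * braidGen n j = braidGen n j * braidGen n i) :
    Wd n a b * Wd n s t = Wd n s t * Wd n a b := by
  induction b, hab using Nat.le_induction with
  | base => rw [Wd_self, mul_one, one_mul]
  | succ b hab ih =>
    rw [Wd_peel_top (show a < b + 1 by omega)]
    simp only [Nat.add_sub_cancel]
    rw [mul_assoc, ih (fun i j hi1 hi2 => h i j hi1 (by omega)), ← mul_assoc,
        gen_comm_Wd hst (fun j hj1 hj2 => h (b+1) j (by omega) le_rfl hj1 hj2), mul_assoc]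

lemma bandConj_eq (n t s : ℕ) : bandConj n t s = Wd n s (t-1) := rfl

lemma band_eq (n t s : ℕ) :
    band n t s = Wd n s (t-1) * braidGen n s * (Wd n s (t-1))⁻¹ := rfl

lemma delta_eq (n : ℕ) : fundamentalBraid n = Wd n 0 (n-1) := by
  rw [fundamentalBraid, Wd, Nat.sub_zero]
  congr 1
  apply List.map_congr_left
  intro k hk
  rw [band_eq]
  have h1 : Wd n (n - k - 1) (n - k - 1) = 1 := by
    have : n - k - 1 = (n - k) - 1 := rfl
    exact Wd_self _
  have h2 : n - k - 1 = n - 1 - k := by omega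
  rw [h1, one_mul, inv_one, mul_one, h2]

lemma gen_mem {n i : ℕ} (h1 : 1 ≤ i) (h2 : i ≤ n - 1) :
    braidGen n i ∈ bandSubmonoid n := by
  apply Submonoid.subset_closure
  refine ⟨i + 1, i, by omega, by omega, h1, ?_⟩
  rw [band_eq]
  have : Wd n i (i + 1 - 1) = 1 := Wd_self i
  rw [this, one_mul, inv_one, mul_one]

lemma Wd_mem {n s t : ℕ} (hst : s ≤ t) (ht : t ≤ n - 1) :
    Wd n s t ∈ bandSubmonoid n := by
  induction t, hst using Nat.le_induction with
  | base => rw [Wd_self]; exact one_mem _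
  | succ t hst ih =>
    rw [Wd_peel_top (show s < t + 1 by omega)]
    simp only [Nat.add_sub_cancel]
    exact mul_mem (gen_mem (by omega) (by omega)) (ih (by omega))

/-- down-shift: `δ σ_j = σ_{j-1} δ` for `2 ≤ j ≤ n-1`. -/
lemma delta_conj_gen {n j : ℕ} (h2 : 2 ≤ j) (h3 : j ≤ n - 1) :
    fundamentalBraid n * braidGen n j = braidGen n (j-1) * fundamentalBraid n := by
  have hcomm1 : braidGen n j * Wd n 0 (j-2) = Wd n 0 (j-2) * braidGen n j :=
    gen_comm_Wd (by omega) (fun i hi1 hi2 => (gen_comm (by omega) (by omega) h3).symm)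
  have hcomm2 : braidGen n (j-1) * Wd n j (n-1) = Wd n j (n-1) * braidGen n (j-1) :=
    gen_comm_Wd (by omega) (fun i hi1 hi2 => gen_comm (by omega) (by omega) (by omega))
  have hbraid : braidGen n (j-1) * braidGen n j * braidGen n (j-1)
      = braidGen n j * braidGen n (j-1) * braidGen n j := by
    have := gen_braid (i := j - 1) (n := n) (by omega) (by omega)
    have hj : j - 1 + 1 = j := by omega
    rwa [hj] at this
  calc fundamentalBraid n * braidGen n j
      = (Wd n j (n-1) * (braidGen n j * (braidGen n (j-1) * Wd n 0 (j-2)))) * braidGen n j := by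
        rw [delta_eq, Wd_split (show 0 ≤ j by omega) h3,
            Wd_peel_top (show 0 < j by omega), Wd_peel_top (show 0 < j - 1 by omega)]
        have : j - 1 - 1 = j - 2 := by omega
        rw [this, mul_assoc]
    _ = Wd n j (n-1) * (braidGen n j * braidGen n (j-1) * braidGen n j) * Wd n 0 (j-2) := by
        rw [mul_assoc, mul_assoc, mul_assoc, ← hcomm1]
        group
    _ = Wd n j (n-1) * (braidGen n (j-1) * braidGen n j * braidGen n (j-1)) * Wd n 0 (j-2) := by
        rw [hbraid]
    _ = braidGen n (j-1) * ((Wd n j (n-1) * braidGen n j) * (braidGen n (j-1) * Wd n 0 (j-2))) := by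
        rw [← mul_assoc, ← mul_assoc, ← hcomm2]
        group
    _ = braidGen n (j-1) * fundamentalBraid n := by
        have e1 : Wd n j (n-1) * braidGen n j = Wd n (j-1) (n-1) := by
          have h := Wd_peel_bot (n := n) (s := j - 1) (t := n - 1) (by omega)
          have hj : j - 1 + 1 = j := by omega
          rw [hj] at h
          exact h.symm
        have e2 : Wd n 0 (j-1) = braidGen n (j-1) * Wd n 0 (j-2) := by
          rw [Wd_peel_top (show 0 < j - 1 by omega)]
          have : j - 1 - 1 = j - 2 := by omega
          rw [this]
        rw [← e2, e1, ← Wd_split (by omega) (by omega), delta_eq]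
/-- helper: swap nested conjugations for commuting conjugators -/
lemma conj_swap {G : Type*} [Group G] {a b x : G} (h : a * b = b * a) :
    a * (b * x * b⁻¹) * a⁻¹ = b * (a * x * a⁻¹) * b⁻¹ := by
  have h' : b⁻¹ * a⁻¹ = a⁻¹ * b⁻¹ := by
    rw [← mul_inv_rev, ← mul_inv_rev, h]
  calc a * (b * x * b⁻¹) * a⁻¹ = (a * b) * x * (b⁻¹ * a⁻¹) := by group
    _ = (b * a) * x * (a⁻¹ * b⁻¹) := by rw [h, h']
    _ = b * (a * x * a⁻¹) * b⁻¹ := by group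

/-- Key wraparound lemma `K`. -/
lemma wraparound {n : ℕ} (hn : 2 ≤ n) : ∀ t, 2 ≤ t → t ≤ n →
    Wd n 0 (t-2) * (Wd n 1 (t-1) * braidGen n 1 * (Wd n 1 (t-1))⁻¹) * (Wd n 0 (t-2))⁻¹
      = braidGen n (t-1) := by
  intro t
  induction t with
  | zero => omega
  | succ t ih =>
    intro h2 hn'
    rcases Nat.lt_or_ge t 2 with ht | ht
    · -- t + 1 = 2, i.e. t = 1
      have : t = 1 := by omega
      subst this
      simp only [Nat.sub_self, show (2:ℕ) - 2 = 0 from rfl]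
      rw [Wd_self, Wd_self]
      group
    · -- t ≥ 2, use ih
      have key := ih ht (by omega)
      have e1 : (t+1) - 2 = t - 1 := by omega
      have e2 : (t+1) - 1 = t := by omega
      rw [e1, e2]
      have p1 : Wd n 0 (t-1) = braidGen n (t-1) * Wd n 0 (t-2) := by
        rw [Wd_peel_top (show 0 < t - 1 by omega)]
        have : t - 1 - 1 = t - 2 := by omega
        rw [this]
      have p2 : Wd n 1 t = braidGen n t * Wd n 1 (t-1) :=
        Wd_peel_top (show 1 < t by omega)
      have hcomm : braidGen n t * Wd n 0 (t-2) = Wd n 0 (t-2) * braidGen n t :=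
        gen_comm_Wd (by omega) (fun j hj1 hj2 => (gen_comm (by omega) (by omega) (by omega)).symm)
      have hbraid : braidGen n (t-1) * braidGen n t * braidGen n (t-1)
          = braidGen n t * braidGen n (t-1) * braidGen n t := by
        have h := gen_braid (i := t - 1) (n := n) (by omega) (by omega)
        have hj : t - 1 + 1 = t := by omega
        rwa [hj] at h
      calc Wd n 0 (t-1) * (Wd n 1 t * braidGen n 1 * (Wd n 1 t)⁻¹) * (Wd n 0 (t-1))⁻¹
          = (braidGen n (t-1)) * (Wd n 0 (t-2) *
              (braidGen n t * (Wd n 1 (t-1) * braidGen n 1 * (Wd n 1 (t-1))⁻¹) * (braidGen n t)⁻¹)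
              * (Wd n 0 (t-2))⁻¹) * (braidGen n (t-1))⁻¹ := by
            rw [p1, p2]; group
        _ = (braidGen n (t-1)) * (braidGen n t *
              (Wd n 0 (t-2) * (Wd n 1 (t-1) * braidGen n 1 * (Wd n 1 (t-1))⁻¹) * (Wd n 0 (t-2))⁻¹)
              * (braidGen n t)⁻¹) * (braidGen n (t-1))⁻¹ := by
            rw [conj_swap hcomm.symm]
        _ = braidGen n (t-1) * (braidGen n t * braidGen n (t-1) * (braidGen n t)⁻¹) * (braidGen n (t-1))⁻¹ := by
            rw [key]
        _ = braidGen n t := by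
            have : braidGen n (t-1) * (braidGen n t * braidGen n (t-1) * (braidGen n t)⁻¹) * (braidGen n (t-1))⁻¹
                = (braidGen n (t-1) * braidGen n t * braidGen n (t-1)) * (braidGen n t)⁻¹ * (braidGen n (t-1))⁻¹ := by
              group
            rw [this, hbraid]
            group

/-- conjugation of a segment by `δ` shifts indices down. -/
lemma delta_conj_Wd {n : ℕ} {s t : ℕ} (hs : 1 ≤ s) (hst : s ≤ t) (ht : t ≤ n - 1) :
    fundamentalBraid n * Wd n s t * (fundamentalBraid n)⁻¹ = Wd n (s-1) (t-1) := by
  induction t, hst using Nat.le_induction with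
  | base =>
    rw [Wd_self, Wd_self, mul_one, mul_inv_cancel]
  | succ t hst ih =>
    rw [Wd_peel_top (show s < t + 1 by omega)]
    simp only [Nat.add_sub_cancel]
    have hc := delta_conj_gen (n := n) (j := t + 1) (by omega) (by omega)
    calc fundamentalBraid n * (braidGen n (t+1) * Wd n s t) * (fundamentalBraid n)⁻¹
        = (fundamentalBraid n * braidGen n (t+1)) *
            ((fundamentalBraid n)⁻¹ * (fundamentalBraid n * Wd n s t * (fundamentalBraid n)⁻¹)) := by
          group
      _ = braidGen n t * Wd n (s-1) (t-1) := by
          rw [hc, ih (by omega)]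
          have : t + 1 - 1 = t := by omega
          rw [this]
          group
      _ = Wd n (s-1) t := by
          rw [← Wd_peel_top (show s - 1 < t by omega)]
lemma delta_factor {n : ℕ} (hn : 2 ≤ n) :
    fundamentalBraid n = Wd n 1 (n-1) * braidGen n 1 := by
  rw [delta_eq]
  have h := Wd_peel_bot (n := n) (s := 0) (t := n - 1) (by omega)
  rwa [zero_add] at h

lemma delta_conj_band {n t s : ℕ} (hn : 2 ≤ n) (ht : t ≤ n) (hs1 : 1 ≤ s) (hst : s < t) :
    fundamentalBraid n * band n t s * (fundamentalBraid n)⁻¹ ∈ bandSubmonoid n := by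
  set δ := fundamentalBraid n with hδ
  rcases Nat.lt_or_ge s 2 with hs2 | hs2
  · -- s = 1 : wraparound case
    have hs : s = 1 := by omega
    subst hs
    have hδ1 : δ * braidGen n 1 * δ⁻¹ = Wd n 1 (n-1) * braidGen n 1 * (Wd n 1 (n-1))⁻¹ := by
      rw [hδ, delta_factor hn]; group
    have hWC : δ * Wd n 1 (t-1) * δ⁻¹ = Wd n 0 (t-1-1) := by
      have h := delta_conj_Wd (n := n) (s := 1) (t := t - 1) le_rfl (by omega) (by omega)
      simpa using h
    have hsplit : Wd n 1 (n-1) = Wd n (t-1) (n-1) * Wd n 1 (t-1) :=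
      Wd_split (by omega) (by omega)
    have hcomm : Wd n 0 (t-1-1) * Wd n (t-1) (n-1) = Wd n (t-1) (n-1) * Wd n 0 (t-1-1) :=
      Wd_comm_Wd (by omega) (by omega)
        (fun i j hi1 hi2 hj1 hj2 => gen_comm (by omega) (by omega) (by omega))
    have hK : Wd n 0 (t-1-1) * (Wd n 1 (t-1) * braidGen n 1 * (Wd n 1 (t-1))⁻¹) * (Wd n 0 (t-1-1))⁻¹
        = braidGen n (t-1) := by
      have h := wraparound hn t (by omega) ht
      have e : t - 2 = t - 1 - 1 := by omega
      rwa [e] at h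
    have key : δ * band n t 1 * δ⁻¹ = band n n (t-1) := by
      calc δ * band n t 1 * δ⁻¹
          = (δ * Wd n 1 (t-1) * δ⁻¹) * (δ * braidGen n 1 * δ⁻¹) * (δ * Wd n 1 (t-1) * δ⁻¹)⁻¹ := by
            rw [band_eq]; group
        _ = Wd n 0 (t-1-1) * (Wd n (t-1) (n-1) * (Wd n 1 (t-1) * braidGen n 1 * (Wd n 1 (t-1))⁻¹) *
              (Wd n (t-1) (n-1))⁻¹) * (Wd n 0 (t-1-1))⁻¹ := by
            rw [hWC, hδ1, hsplit]; group
        _ = Wd n (t-1) (n-1) * (Wd n 0 (t-1-1) * (Wd n 1 (t-1) * braidGen n 1 * (Wd n 1 (t-1))⁻¹) *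
              (Wd n 0 (t-1-1))⁻¹) * (Wd n (t-1) (n-1))⁻¹ := conj_swap hcomm
        _ = Wd n (t-1) (n-1) * braidGen n (t-1) * (Wd n (t-1) (n-1))⁻¹ := by
            rw [hK]
        _ = band n n (t-1) := by rw [band_eq]
    rw [key]
    exact Submonoid.subset_closure ⟨n, t-1, le_rfl, by omega, by omega, rfl⟩
  · -- s ≥ 2 : plain down-shift
    have hσ : δ * braidGen n s * δ⁻¹ = braidGen n (s-1) := by
      rw [hδ, delta_conj_gen hs2 (by omega)]; group
    have hW : δ * Wd n s (t-1) * δ⁻¹ = Wd n (s-1) (t-1-1) :=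
      delta_conj_Wd (by omega) (by omega) (by omega)
    have key : δ * band n t s * δ⁻¹ = band n (t-1) (s-1) := by
      calc δ * band n t s * δ⁻¹
          = (δ * Wd n s (t-1) * δ⁻¹) * (δ * braidGen n s * δ⁻¹) * (δ * Wd n s (t-1) * δ⁻¹)⁻¹ := by
            rw [band_eq]; group
        _ = Wd n (s-1) (t-1-1) * braidGen n (s-1) * (Wd n (s-1) (t-1-1))⁻¹ := by rw [hσ, hW]
        _ = band n (t-1) (s-1) := by rw [band_eq]
    rw [key]
    exact Submonoid.subset_closure ⟨t-1, s-1, by omega, by omega, by omega, rfl⟩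

lemma delta_conj_mem {n : ℕ} (hn : 2 ≤ n) {x : BraidGroup n} (hx : x ∈ bandSubmonoid n) :
    fundamentalBraid n * x * (fundamentalBraid n)⁻¹ ∈ bandSubmonoid n := by
  induction hx using Submonoid.closure_induction with
  | mem y hy =>
    obtain ⟨t, s, ht, hst, hs, rfl⟩ := hy
    exact delta_conj_band hn ht hs hst
  | one => simpa using one_mem _
  | mul y z hy hz ihy ihz =>
    have e : fundamentalBraid n * (y * z) * (fundamentalBraid n)⁻¹
        = (fundamentalBraid n * y * (fundamentalBraid n)⁻¹) *
          (fundamentalBraid n * z * (fundamentalBraid n)⁻¹) := by group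
    rw [e]
    exact mul_mem ihy ihz

lemma delta_mul_inv_gen {n i : ℕ} (hn : 2 ≤ n) (h1 : 1 ≤ i) (h2 : i ≤ n - 1) :
    fundamentalBraid n * (braidGen n i)⁻¹ ∈ bandSubmonoid n := by
  rcases Nat.lt_or_ge i 2 with hi2 | hi2
  · have hi : i = 1 := by omega
    subst hi
    have e : fundamentalBraid n * (braidGen n 1)⁻¹ = Wd n 1 (n-1) := by
      rw [delta_factor hn]; group
    rw [e]
    exact Wd_mem (by omega) le_rfl
  · have e0 : fundamentalBraid n
        = Wd n i (n-1) * (braidGen n i * (braidGen n (i-1) * Wd n 0 (i-2))) := by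
      rw [delta_eq, Wd_split (show 0 ≤ i by omega) h2,
          Wd_peel_top (show 0 < i by omega), Wd_peel_top (show 0 < i - 1 by omega)]
      have : i - 1 - 1 = i - 2 := by omega
      rw [this]
    have hcomm : braidGen n i * Wd n 0 (i-2) = Wd n 0 (i-2) * braidGen n i :=
      gen_comm_Wd (by omega) (fun j hj1 hj2 => (gen_comm (by omega) (by omega) h2).symm)
    have hc : Commute (braidGen n i) (Wd n 0 (i-2)) := hcomm
    have hcomm' : Wd n 0 (i-2) * (braidGen n i)⁻¹ = (braidGen n i)⁻¹ * Wd n 0 (i-2) :=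
      (hc.inv_left.symm).eq
    have e : fundamentalBraid n * (braidGen n i)⁻¹
        = Wd n i (n-1) * (braidGen n i * braidGen n (i-1) * (braidGen n i)⁻¹) * Wd n 0 (i-2) := by
      rw [e0]
      calc Wd n i (n-1) * (braidGen n i * (braidGen n (i-1) * Wd n 0 (i-2))) * (braidGen n i)⁻¹
          = Wd n i (n-1) * braidGen n i * braidGen n (i-1) * (Wd n 0 (i-2) * (braidGen n i)⁻¹) := by
            group
        _ = Wd n i (n-1) * braidGen n i * braidGen n (i-1) * ((braidGen n i)⁻¹ * Wd n 0 (i-2)) := by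
            rw [hcomm']
        _ = Wd n i (n-1) * (braidGen n i * braidGen n (i-1) * (braidGen n i)⁻¹) * Wd n 0 (i-2) := by
            group
    rw [e]
    have hband : braidGen n i * braidGen n (i-1) * (braidGen n i)⁻¹ ∈ bandSubmonoid n := by
      apply Submonoid.subset_closure
      refine ⟨i + 1, i - 1, by omega, by omega, by omega, ?_⟩
      rw [band_eq]
      have e1 : Wd n (i-1) (i+1-1) = braidGen n i := by
        simp only [Nat.add_sub_cancel]
        rw [Wd_peel_top (show i - 1 < i by omega), Wd_self, mul_one]
      rw [e1]
    exact mul_mem (mul_mem (Wd_mem (by omega) le_rfl) hband) (Wd_mem (by omega) (by omega))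
lemma braidGen_of {n : ℕ} (a : Fin (n-1)) :
    braidGen n (↑a + 1) = PresentedGroup.mk (braidRels n) (FreeGroup.of a) := by
  rw [braidGen, dif_pos (show (↑a : ℕ) + 1 - 1 < n - 1 by simpa using a.isLt)]
  have : (⟨↑a + 1 - 1, by simpa using a.isLt⟩ : Fin (n-1)) = a := Fin.ext (by simp)
  rw [this]
  rfl
end DNF

/-- Every element `w` of the braid group `B n` (for `n ≥ 2`) can be
written in the form `w = δ^p · P` with `p` an integer and `P` a product of (positive)
band generators. -/
theorem delta_normal_form (n : ℕ) (hn : 2 ≤ n) (w : BraidGroup n) :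
    ∃ (p : ℤ) (P : BraidGroup n), P ∈ bandSubmonoid n ∧ w = fundamentalBraid n ^ p * P := by
  obtain ⟨x, rfl⟩ := PresentedGroup.mk_surjective (braidRels n) w
  rw [← FreeGroup.mk_toWord (x := x)]
  generalize FreeGroup.toWord x = L
  induction L using List.reverseRecOn with
  | nil =>
    refine ⟨0, 1, one_mem _, ?_⟩
    rw [← FreeGroup.one_eq_mk, map_one]
    simp
  | append_singleton L p ih =>
    obtain ⟨q, P, hP, hEq⟩ := ih
    obtain ⟨a, b⟩ := p
    have hsplit : (FreeGroup.mk (L ++ [(a, b)]) : FreeGroup (Fin (n-1)))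
        = FreeGroup.mk L * FreeGroup.mk [(a, b)] := (FreeGroup.mul_mk).symm
    rw [hsplit, map_mul, hEq]
    cases b with
    | true =>
      refine ⟨q, P * braidGen n (↑a + 1),
        mul_mem hP (DNF.gen_mem (by omega) (by omega)), ?_⟩
      have h1 : (FreeGroup.mk [(a, true)] : FreeGroup (Fin (n-1))) = FreeGroup.of a := rfl
      rw [h1, ← DNF.braidGen_of a, mul_assoc]
    | false =>
      refine ⟨q - 1,
        (fundamentalBraid n * P * (fundamentalBraid n)⁻¹) *
          (fundamentalBraid n * (braidGen n (↑a + 1))⁻¹),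
        mul_mem (DNF.delta_conj_mem hn hP) (DNF.delta_mul_inv_gen hn (by omega) (by omega)), ?_⟩
      have h1 : (FreeGroup.mk [(a, false)] : FreeGroup (Fin (n-1))) = (FreeGroup.of a)⁻¹ := by
        rw [show (FreeGroup.of a : FreeGroup (Fin (n-1))) = FreeGroup.mk [(a, true)] from rfl,
          FreeGroup.inv_mk]
        rfl
      rw [h1, map_inv, ← DNF.braidGen_of a]
      group
end

section
/- In the braid group B_4, the two elements W₁ = a_{4,2} a_{3,2} a_{2,1} a_{4,3} a_{3,2}² a_{2,1} a_{3,2}^{−1} a_{4,3}^{−1} a_{2,1}^{−1} a_{3,2}^{−1} and W₂ = a_{4,3} a_{3,2}^{−1} a_{2,1}^{−2} a_{3,2}^{−1} a_{3,2} a_{3,2} a_{2,1}² a_{3,2} a_{4,3}^{−1} a_{3,2} a_{2,1} are conjugate; that is, there exists c ∈ B_4 with c · W₁ · c^{−1} = W₂. -/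
theorem braid_rel_one {α : Type*} {rels : Set (FreeGroup α)} {r : FreeGroup α} (h : r ∈ rels) :
    PresentedGroup.mk rels r = 1 := by
  have : r ∈ Subgroup.normalClosure rels := Subgroup.subset_normalClosure h
  exact (QuotientGroup.eq_one_iff r).mpr this

local notation "σ" i => braidGen 4 i

theorem band21 : band 4 2 1 = σ 1 := by
  simp [band, bandConj, List.range_zero]

theorem band32 : band 4 3 2 = σ 2 := by
  simp [band, bandConj, List.range_succ]

theorem band43 : band 4 4 3 = σ 3 := by
  simp [band, bandConj, List.range_succ]

theorem band42 : band 4 4 2 = (σ 3) * (σ 2) * (σ 3)⁻¹ := by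
  simp [band, bandConj, List.range_succ]

theorem brel12 : (σ 1) * (σ 2) * (σ 1) = (σ 2) * (σ 1) * (σ 2) := by
  have h := braid_rel_one (rels := braidRels 4)
    (r := FreeGroup.of (0:Fin 3) * FreeGroup.of 1 * FreeGroup.of 0 *
      (FreeGroup.of 1 * FreeGroup.of 0 * FreeGroup.of 1)⁻¹)
    (Or.inr ⟨0, 1, rfl, rfl⟩)
  simp only [map_mul, map_inv] at h
  have h2 : ((σ 1) * (σ 2) * (σ 1)) * ((σ 2) * (σ 1) * (σ 2))⁻¹ = 1 := by
    simpa [braidGen, PresentedGroup.of] using h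
  group at h2 ⊢
  exact mul_inv_eq_one.mp (by simpa [mul_assoc] using h2)

theorem brel23 : (σ 2) * (σ 3) * (σ 2) = (σ 3) * (σ 2) * (σ 3) := by
  have h := braid_rel_one (rels := braidRels 4)
    (r := FreeGroup.of (1:Fin 3) * FreeGroup.of 2 * FreeGroup.of 1 *
      (FreeGroup.of 2 * FreeGroup.of 1 * FreeGroup.of 2)⁻¹)
    (Or.inr ⟨1, 2, rfl, rfl⟩)
  simp only [map_mul, map_inv] at h
  have h2 : ((σ 2) * (σ 3) * (σ 2)) * ((σ 3) * (σ 2) * (σ 3))⁻¹ = 1 := by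
    simpa [braidGen, PresentedGroup.of] using h
  group at h2 ⊢
  exact mul_inv_eq_one.mp (by simpa [mul_assoc] using h2)

theorem brel13 : (σ 1) * (σ 3) = (σ 3) * (σ 1) := by
  have h := braid_rel_one (rels := braidRels 4)
    (r := FreeGroup.of (0:Fin 3) * FreeGroup.of 2 * (FreeGroup.of 0)⁻¹ * (FreeGroup.of 2)⁻¹)
    (Or.inl ⟨0, 2, by norm_num, rfl⟩)
  simp only [map_mul, map_inv] at h
  have h2 : ((σ 1) * (σ 3)) * ((σ 3) * (σ 1))⁻¹ = 1 := by
    simpa [braidGen, PresentedGroup.of, mul_assoc] using h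
  group at h2 ⊢
  exact mul_inv_eq_one.mp (by simpa [mul_assoc] using h2)

set_option maxHeartbeats 1000000 in
theorem key_eq :
    (σ 2)⁻¹ * (σ 1)⁻¹ * (σ 3)⁻¹ * (σ 2)⁻¹ * (σ 3) * (σ 2) * (σ 3)⁻¹ * (σ 2) * (σ 1) * (σ 3) * (σ 2) * (σ 2) * (σ 1) * (σ 2)⁻¹ * (σ 3)⁻¹ * (σ 1)⁻¹ * (σ 3) * (σ 1) * (σ 2) = (σ 3) * (σ 2)⁻¹ * (σ 1)⁻¹ * (σ 1)⁻¹ * (σ 2) * (σ 1) * (σ 1) * (σ 2) * (σ 3)⁻¹ * (σ 2) * (σ 1) := by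
    calc (σ 2)⁻¹ * (σ 1)⁻¹ * (σ 3)⁻¹ * (σ 2)⁻¹ * (σ 3) * (σ 2) * (σ 3)⁻¹ * (σ 2) * (σ 1) * (σ 3) * (σ 2) * (σ 2) * (σ 1) * (σ 2)⁻¹ * (σ 3)⁻¹ * (σ 1)⁻¹ * (σ 3) * (σ 1) * (σ 2)
      _ = (σ 2)⁻¹ * (σ 1)⁻¹ * (σ 3)⁻¹ * (σ 2)⁻¹ * (σ 3) * (σ 2) * (σ 3)⁻¹ * (σ 2) * ((σ 1) * (σ 3)) * (σ 2) * (σ 2) * (σ 1) * (σ 2)⁻¹ * (σ 3)⁻¹ * (σ 1)⁻¹ * (σ 3) * (σ 1) * (σ 2) := by group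
      _ = (σ 2)⁻¹ * (σ 1)⁻¹ * (σ 3)⁻¹ * (σ 2)⁻¹ * (σ 3) * (σ 2) * (σ 3)⁻¹ * (σ 2) * ((σ 3) * (σ 1)) * (σ 2) * (σ 2) * (σ 1) * (σ 2)⁻¹ * (σ 3)⁻¹ * (σ 1)⁻¹ * (σ 3) * (σ 1) * (σ 2) := by rw [brel13]
      _ = (σ 2)⁻¹ * (σ 1)⁻¹ * (σ 3)⁻¹ * (σ 2)⁻¹ * (σ 3) * (σ 2) * (σ 3)⁻¹ * (σ 2) * (σ 3) * (σ 1) * (σ 2) * (σ 2) * (σ 1) * (σ 2)⁻¹ * (σ 3)⁻¹ * (σ 1)⁻¹ * ((σ 3) * (σ 1)) * (σ 2) := by group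
      _ = (σ 2)⁻¹ * (σ 1)⁻¹ * (σ 3)⁻¹ * (σ 2)⁻¹ * (σ 3) * (σ 2) * (σ 3)⁻¹ * (σ 2) * (σ 3) * (σ 1) * (σ 2) * (σ 2) * (σ 1) * (σ 2)⁻¹ * (σ 3)⁻¹ * (σ 1)⁻¹ * ((σ 1) * (σ 3)) * (σ 2) := by rw [← brel13]
      _ = (σ 2)⁻¹ * (σ 1)⁻¹ * (σ 3)⁻¹ * (σ 2)⁻¹ * ((σ 3) * (σ 2) * (σ 3)) * (σ 3)⁻¹ * (σ 3)⁻¹ * (σ 2) * (σ 3) * (σ 1) * (σ 2) * (σ 2) * (σ 1) := by group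
      _ = (σ 2)⁻¹ * (σ 1)⁻¹ * (σ 3)⁻¹ * (σ 2)⁻¹ * ((σ 2) * (σ 3) * (σ 2)) * (σ 3)⁻¹ * (σ 3)⁻¹ * (σ 2) * (σ 3) * (σ 1) * (σ 2) * (σ 2) * (σ 1) := by rw [← brel23]
      _ = (σ 2)⁻¹ * (σ 1)⁻¹ * ((σ 2) * (σ 1) * (σ 2)) * (σ 2)⁻¹ * (σ 1)⁻¹ * (σ 3)⁻¹ * (σ 3)⁻¹ * (σ 2) * (σ 3) * (σ 1) * (σ 2) * (σ 2) * (σ 1) := by group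
      _ = (σ 2)⁻¹ * (σ 1)⁻¹ * ((σ 1) * (σ 2) * (σ 1)) * (σ 2)⁻¹ * (σ 1)⁻¹ * (σ 3)⁻¹ * (σ 3)⁻¹ * (σ 2) * (σ 3) * (σ 1) * (σ 2) * (σ 2) * (σ 1) := by rw [← brel12]
      _ = 1 * ((σ 1) * (σ 3)) * (σ 3)⁻¹ * (σ 2)⁻¹ * (σ 1)⁻¹ * (σ 3)⁻¹ * (σ 3)⁻¹ * (σ 2) * (σ 3) * (σ 1) * (σ 2) * (σ 2) * (σ 1) := by group
      _ = 1 * ((σ 3) * (σ 1)) * (σ 3)⁻¹ * (σ 2)⁻¹ * (σ 1)⁻¹ * (σ 3)⁻¹ * (σ 3)⁻¹ * (σ 2) * (σ 3) * (σ 1) * (σ 2) * (σ 2) * (σ 1) := by rw [brel13]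
      _ = (σ 3) * (σ 1) * (σ 3)⁻¹ * (σ 2)⁻¹ * (σ 1)⁻¹ * (σ 3)⁻¹ * ((σ 1) * (σ 3)) * (σ 3)⁻¹ * (σ 1)⁻¹ * (σ 3)⁻¹ * (σ 2) * (σ 3) * (σ 1) * (σ 2) * (σ 2) * (σ 1) := by group
      _ = (σ 3) * (σ 1) * (σ 3)⁻¹ * (σ 2)⁻¹ * (σ 1)⁻¹ * (σ 3)⁻¹ * ((σ 3) * (σ 1)) * (σ 3)⁻¹ * (σ 1)⁻¹ * (σ 3)⁻¹ * (σ 2) * (σ 3) * (σ 1) * (σ 2) * (σ 2) * (σ 1) := by rw [brel13]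
      _ = (σ 3) * (σ 1) * (σ 3)⁻¹ * (σ 2)⁻¹ * (σ 3)⁻¹ * (σ 1)⁻¹ * (σ 3)⁻¹ * ((σ 1) * (σ 3)) * (σ 3)⁻¹ * (σ 1)⁻¹ * (σ 2) * (σ 3) * (σ 1) * (σ 2) * (σ 2) * (σ 1) := by group
      _ = (σ 3) * (σ 1) * (σ 3)⁻¹ * (σ 2)⁻¹ * (σ 3)⁻¹ * (σ 1)⁻¹ * (σ 3)⁻¹ * ((σ 3) * (σ 1)) * (σ 3)⁻¹ * (σ 1)⁻¹ * (σ 2) * (σ 3) * (σ 1) * (σ 2) * (σ 2) * (σ 1) := by rw [brel13]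
      _ = (σ 3) * (σ 1) * ((σ 3) * (σ 2) * (σ 3))⁻¹ * (σ 3)⁻¹ * (σ 1)⁻¹ * (σ 2) * (σ 3) * (σ 1) * (σ 2) * (σ 2) * (σ 1) := by group
      _ = (σ 3) * (σ 1) * ((σ 2) * (σ 3) * (σ 2))⁻¹ * (σ 3)⁻¹ * (σ 1)⁻¹ * (σ 2) * (σ 3) * (σ 1) * (σ 2) * (σ 2) * (σ 1) := by rw [← brel23]
      _ = (σ 3) * (σ 1) * (σ 2)⁻¹ * ((σ 3) * (σ 2) * (σ 3))⁻¹ * (σ 1)⁻¹ * (σ 2) * (σ 3) * (σ 1) * (σ 2) * (σ 2) * (σ 1) := by group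
      _ = (σ 3) * (σ 1) * (σ 2)⁻¹ * ((σ 2) * (σ 3) * (σ 2))⁻¹ * (σ 1)⁻¹ * (σ 2) * (σ 3) * (σ 1) * (σ 2) * (σ 2) * (σ 1) := by rw [← brel23]
      _ = (σ 3) * (σ 1) * (σ 2)⁻¹ * (σ 2)⁻¹ * (σ 3)⁻¹ * (σ 2)⁻¹ * (σ 1)⁻¹ * ((σ 2) * (σ 1) * (σ 2)) * (σ 2)⁻¹ * (σ 1)⁻¹ * (σ 3) * (σ 1) * (σ 2) * (σ 2) * (σ 1) := by group
      _ = (σ 3) * (σ 1) * (σ 2)⁻¹ * (σ 2)⁻¹ * (σ 3)⁻¹ * (σ 2)⁻¹ * (σ 1)⁻¹ * ((σ 1) * (σ 2) * (σ 1)) * (σ 2)⁻¹ * (σ 1)⁻¹ * (σ 3) * (σ 1) * (σ 2) * (σ 2) * (σ 1) := by rw [← brel12]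
      _ = (σ 3) * (σ 1) * (σ 2)⁻¹ * (σ 2)⁻¹ * (σ 3)⁻¹ * (σ 1) * (σ 2)⁻¹ * (σ 1)⁻¹ * ((σ 3) * (σ 1)) * (σ 2) * (σ 2) * (σ 1) := by group
      _ = (σ 3) * (σ 1) * (σ 2)⁻¹ * (σ 2)⁻¹ * (σ 3)⁻¹ * (σ 1) * (σ 2)⁻¹ * (σ 1)⁻¹ * ((σ 1) * (σ 3)) * (σ 2) * (σ 2) * (σ 1) := by rw [← brel13]
      _ = (σ 3) * (σ 1) * (σ 2)⁻¹ * (σ 2)⁻¹ * (σ 3)⁻¹ * (σ 1) * (σ 2)⁻¹ * ((σ 3) * (σ 2) * (σ 3)) * (σ 3)⁻¹ * (σ 2) * (σ 1) := by group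
      _ = (σ 3) * (σ 1) * (σ 2)⁻¹ * (σ 2)⁻¹ * (σ 3)⁻¹ * (σ 1) * (σ 2)⁻¹ * ((σ 2) * (σ 3) * (σ 2)) * (σ 3)⁻¹ * (σ 2) * (σ 1) := by rw [← brel23]
      _ = (σ 3) * (σ 2)⁻¹ * (σ 1)⁻¹ * ((σ 1) * (σ 2) * (σ 1)) * (σ 2)⁻¹ * (σ 2)⁻¹ * (σ 3)⁻¹ * (σ 1) * (σ 3) * (σ 2) * (σ 3)⁻¹ * (σ 2) * (σ 1) := by group
      _ = (σ 3) * (σ 2)⁻¹ * (σ 1)⁻¹ * ((σ 2) * (σ 1) * (σ 2)) * (σ 2)⁻¹ * (σ 2)⁻¹ * (σ 3)⁻¹ * (σ 1) * (σ 3) * (σ 2) * (σ 3)⁻¹ * (σ 2) * (σ 1) := by rw [brel12]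
      _ = (σ 3) * (σ 2)⁻¹ * (σ 1)⁻¹ * (σ 1)⁻¹ * ((σ 1) * (σ 2) * (σ 1)) * (σ 2)⁻¹ * (σ 3)⁻¹ * (σ 1) * (σ 3) * (σ 2) * (σ 3)⁻¹ * (σ 2) * (σ 1) := by group
      _ = (σ 3) * (σ 2)⁻¹ * (σ 1)⁻¹ * (σ 1)⁻¹ * ((σ 2) * (σ 1) * (σ 2)) * (σ 2)⁻¹ * (σ 3)⁻¹ * (σ 1) * (σ 3) * (σ 2) * (σ 3)⁻¹ * (σ 2) * (σ 1) := by rw [brel12]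
      _ = (σ 3) * (σ 2)⁻¹ * (σ 1)⁻¹ * (σ 1)⁻¹ * (σ 2) * (σ 1) * (σ 3)⁻¹ * ((σ 1) * (σ 3)) * (σ 2) * (σ 3)⁻¹ * (σ 2) * (σ 1) := by group
      _ = (σ 3) * (σ 2)⁻¹ * (σ 1)⁻¹ * (σ 1)⁻¹ * (σ 2) * (σ 1) * (σ 3)⁻¹ * ((σ 3) * (σ 1)) * (σ 2) * (σ 3)⁻¹ * (σ 2) * (σ 1) := by rw [brel13]
      _ = (σ 3) * (σ 2)⁻¹ * (σ 1)⁻¹ * (σ 1)⁻¹ * (σ 2) * (σ 1) * (σ 1) * (σ 2) * (σ 3)⁻¹ * (σ 2) * (σ 1) := by group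

set_option maxHeartbeats 1000000 in
/-- The two boundary words of the embedded foliated disc of the paper,
`W₁ = a_{4,2} a_{3,2} a_{2,1} a_{4,3} a_{3,2}² a_{2,1} a_{3,2}⁻¹ a_{4,3}⁻¹ a_{2,1}⁻¹ a_{3,2}⁻¹`
and
`W₂ = a_{4,3} a_{3,2}⁻¹ a_{2,1}⁻² a_{3,2}⁻¹ a_{3,2} a_{3,2} a_{2,1}² a_{3,2} a_{4,3}⁻¹ a_{3,2} a_{2,1}`,
are conjugate in `B 4`. -/
theorem boundary_words_conjugate :
    ∃ c : BraidGroup 4,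
      c * (band 4 4 2 * band 4 3 2 * band 4 2 1 * band 4 4 3 * band 4 3 2 ^ 2 *
            band 4 2 1 * (band 4 3 2)⁻¹ * (band 4 4 3)⁻¹ * (band 4 2 1)⁻¹ *
            (band 4 3 2)⁻¹) * c⁻¹ =
        band 4 4 3 * (band 4 3 2)⁻¹ * band 4 2 1 ^ (-2 : ℤ) * (band 4 3 2)⁻¹ *
          band 4 3 2 * band 4 3 2 * band 4 2 1 ^ 2 * band 4 3 2 * (band 4 4 3)⁻¹ *
          band 4 3 2 * band 4 2 1 := by
  refine ⟨(σ 2)⁻¹ * (σ 1)⁻¹ * (σ 3)⁻¹ * (σ 2)⁻¹, ?_⟩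
  rw [band42, band32, band43, band21]
  simp only [pow_two]
  trans (σ 2)⁻¹ * (σ 1)⁻¹ * (σ 3)⁻¹ * (σ 2)⁻¹ * (σ 3) * (σ 2) * (σ 3)⁻¹ * (σ 2) * (σ 1) * (σ 3) * (σ 2) * (σ 2) * (σ 1) * (σ 2)⁻¹ * (σ 3)⁻¹ * (σ 1)⁻¹ * (σ 3) * (σ 1) * (σ 2)
  · group
  trans (σ 3) * (σ 2)⁻¹ * (σ 1)⁻¹ * (σ 1)⁻¹ * (σ 2) * (σ 1) * (σ 1) * (σ 2) * (σ 3)⁻¹ * (σ 2) * (σ 1)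
  · exact key_eq
  · group
end
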